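/- Let SS, TT, ST be square-integrable random variables with Cov(SS, TT) = 0 and Var(SS) = Var(TT). Define IDD = SS − TT, SD = SS − ST, TD = TT − ST. Then Cov(TT, ST) > Cov(SS, ST) if and only if Cov(IDD, SD)² > Cov(IDD, TD)². -/

import Mathlib

open MeasureTheory ProbabilityTheory

noncomputable def cov {Ω : Type*} [MeasurableSpace Ω] (μ : Measure Ω) (X Y : Ω → ℝ) : ℝ :=
  (∫ ω, X ω * Y ω ∂μ) - (∫ ω, X ω ∂μ) * (∫ ω, Y ω ∂μ)

noncomputable def var {Ω : Type*} [MeasurableSpace Ω] (μ : Measure Ω) (X : Ω → ℝ) : ℝ :=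
  cov μ X X

/-!
By bilinearity, with `d = Cov(TT, ST) - Cov(SS, ST)` and `V` the common variance,
`Cov(IDD, SD) = d + V` and `Cov(IDD, TD) = d - V`. The difference of their squares is `4 V d`,
which is positive exactly when `d` is, since `V > 0`.
-/

section Covariance

variable {Ω : Type*} [MeasurableSpace Ω]

lemma cov_comm (μ : Measure Ω) (X Y : Ω → ℝ) : cov μ X Y = cov μ Y X := by
  simp only [cov, mul_comm]

lemma cov_eq_covariance {μ : Measure Ω} [IsProbabilityMeasure μ] {X Y : Ω → ℝ}
    (hX : MemLp X 2 μ) (hY : MemLp Y 2 μ) : cov μ X Y = covariance X Y μ :=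
  (covariance_eq_sub hX hY).symm

lemma cov_sub_sub {μ : Measure Ω} [IsProbabilityMeasure μ] {X Y Z W : Ω → ℝ}
    (hX : MemLp X 2 μ) (hY : MemLp Y 2 μ) (hZ : MemLp Z 2 μ) (hW : MemLp W 2 μ) :
    cov μ (fun ω => X ω - Y ω) (fun ω => Z ω - W ω) =
      cov μ X Z - cov μ X W - cov μ Y Z + cov μ Y W := by
  rw [cov_eq_covariance (X := fun ω => X ω - Y ω) (Y := fun ω => Z ω - W ω) (hX.sub hY)
      (hZ.sub hW), covariance_fun_sub_fun_sub hX hY hZ hW,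
    cov_eq_covariance hX hZ, cov_eq_covariance hX hW, cov_eq_covariance hY hZ,
    cov_eq_covariance hY hW]

end Covariance

lemma sq_sub_lt_sq_add_iff {d v : ℝ} (hv : 0 < v) : (d - v) ^ 2 < (d + v) ^ 2 ↔ 0 < d := by
  rw [← sub_pos, show (d + v) ^ 2 - (d - v) ^ 2 = 4 * v * d by ring]
  exact mul_pos_iff_of_pos_left (by positivity)

theorem stmt5 {Ω : Type*} [MeasurableSpace Ω] (μ : Measure Ω) [IsProbabilityMeasure μ]
    (SS TT ST : Ω → ℝ) (hSS : MemLp SS 2 μ) (hTT : MemLp TT 2 μ) (hST : MemLp ST 2 μ)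
    (hcov : cov μ SS TT = 0) (hvar : var μ SS = var μ TT) (hpos : 0 < var μ SS) :
    cov μ TT ST > cov μ SS ST ↔
      (cov μ (fun ω => SS ω - TT ω) (fun ω => SS ω - ST ω)) ^ 2 >
      (cov μ (fun ω => SS ω - TT ω) (fun ω => TT ω - ST ω)) ^ 2 := by
  have hSD : cov μ (fun ω => SS ω - TT ω) (fun ω => SS ω - ST ω) =
      (cov μ TT ST - cov μ SS ST) + var μ SS := by
    rw [cov_sub_sub hSS hTT hSS hST, cov_comm μ TT SS, hcov, var]
    ring
  have hTD : cov μ (fun ω => SS ω - TT ω) (fun ω => TT ω - ST ω) =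
      (cov μ TT ST - cov μ SS ST) - var μ SS := by
    rw [cov_sub_sub hSS hTT hTT hST, hcov, hvar, var]
    ring
  rw [hSD, hTD, gt_iff_lt, gt_iff_lt, sq_sub_lt_sq_add_iff hpos, sub_pos]
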